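/- The number of weakly increasing (sorted) parking functions of size n equals the n-th Catalan number C_n = (1/(n+1)) * binom(2n, n). -/

import Mathlib

/-- The weakly increasing rearrangement of the entries of `p`. -/
def sortedOf {n : ℕ} (p : Fin n → ℕ) : List ℕ :=
  Multiset.sort (Multiset.ofList (List.ofFn p)) (· ≤ ·)

/-- A parking function of size `n` is a tuple of `n` positive integers such
that, after sorting weakly increasingly, the `i`-th smallest entry is at most `i`. -/
def IsParkingFunction {n : ℕ} (p : Fin n → ℕ) : Prop :=
  (∀ i, 0 < p i) ∧ ∀ i ∈ Finset.range n, (sortedOf p).getD i 0 ≤ i + 1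

/-!
A weakly increasing parking function `a₁ ≤ ⋯ ≤ aₙ` is encoded by the word
`D^(a₁-1) U D^(a₂-a₁) U ⋯ D^(aₙ-aₙ₋₁) U D^(n+1-aₙ)`, so that `aᵢ - 1` is the number of `D`s
before the `i`-th `U`. The excess of `D`s over `U`s in a prefix is largest just before a `U`
(or at the end), where it equals `aᵢ - i`; hence `aᵢ ≤ i` is exactly the Dyck condition, and
the encoding is a bijection onto Dyck words of semilength `n`, which are counted by `catalan n`.
-/

open List DyckStep

def downCounts : ℕ → List DyckStep → List ℕ
  | _, [] => []
  | c, U :: w => c :: downCounts c w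
  | c, D :: w => downCounts (c + 1) w

-- `c` counts the `D`s written so far; the word is padded with `D`s up to `m` in total.
def stepsOfDownCounts (m : ℕ) : ℕ → List ℕ → List DyckStep
  | c, [] => replicate (m - c) D
  | c, a :: l => replicate (a - c) D ++ U :: stepsOfDownCounts m a l

lemma length_downCounts : ∀ c w, (downCounts c w).length = w.count U
  | _, [] => rfl
  | c, U :: w => by simp [downCounts, length_downCounts c w]
  | c, D :: w => by simp [downCounts, length_downCounts (c + 1) w]

lemma le_of_mem_downCounts : ∀ {c w a}, a ∈ downCounts c w → c ≤ a
  | _, [], _, h => by simp [downCounts] at h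
  | c, U :: w, a, h => by
    rcases mem_cons.1 h with rfl | h
    · exact le_rfl
    · exact le_of_mem_downCounts h
  | c, D :: w, a, h => (Nat.le_succ c).trans (le_of_mem_downCounts h)

lemma pairwise_downCounts : ∀ c w, (downCounts c w).Pairwise (· ≤ ·)
  | _, [] => Pairwise.nil
  | c, U :: w => pairwise_cons.2 ⟨fun _ => le_of_mem_downCounts, pairwise_downCounts c w⟩
  | c, D :: w => pairwise_downCounts (c + 1) w

lemma downCounts_replicate_append (c k : ℕ) (w : List DyckStep) :
    downCounts c (replicate k D ++ w) = downCounts (c + k) w := by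
  induction k generalizing c with
  | zero => rfl
  | succ k ih => rw [replicate_succ, cons_append, downCounts, ih, Nat.add_right_comm, Nat.add_assoc]

lemma downCounts_stepsOfDownCounts (m : ℕ) :
    ∀ {c l}, l.Pairwise (· ≤ ·) → (∀ a ∈ l, c ≤ a) → downCounts c (stepsOfDownCounts m c l) = l
  | c, [], _, _ => by
    rw [stepsOfDownCounts, ← append_nil (replicate _ D), downCounts_replicate_append]; rfl
  | c, a :: l, hl, hc => by
    rw [stepsOfDownCounts, downCounts_replicate_append, Nat.add_sub_cancel' (hc a mem_cons_self),
      downCounts, downCounts_stepsOfDownCounts m (pairwise_cons.1 hl).2 (pairwise_cons.1 hl).1]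

lemma stepsOfDownCounts_eq_D_cons {m c : ℕ} (hcm : c < m) :
    ∀ {l : List ℕ}, (∀ a ∈ l, c < a) → stepsOfDownCounts m c l = D :: stepsOfDownCounts m (c + 1) l
  | [], _ => by
    rw [stepsOfDownCounts, stepsOfDownCounts, ← replicate_succ]; congr 1; omega
  | a :: l, hc => by
    have := hc a mem_cons_self
    rw [stepsOfDownCounts, stepsOfDownCounts, ← cons_append, ← replicate_succ]; congr 2; omega

lemma stepsOfDownCounts_downCounts (m : ℕ) :
    ∀ {c w}, c + w.count D = m → stepsOfDownCounts m c (downCounts c w) = w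
  | c, [], h => by simp [stepsOfDownCounts, downCounts, ← h]
  | c, U :: w, h => by
    rw [downCounts, stepsOfDownCounts, Nat.sub_self, replicate_zero, nil_append,
      stepsOfDownCounts_downCounts m (by simpa using h)]
  | c, D :: w, h => by
    rw [count_cons_self] at h
    rw [downCounts, stepsOfDownCounts_eq_D_cons (by omega) (fun _ => le_of_mem_downCounts),
      stepsOfDownCounts_downCounts m (by omega)]

lemma count_U_stepsOfDownCounts (m : ℕ) : ∀ c l, (stepsOfDownCounts m c l).count U = l.length
  | c, [] => by simp [stepsOfDownCounts, count_replicate]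
  | c, a :: l => by
    simp [stepsOfDownCounts, count_U_stepsOfDownCounts m a l, count_replicate]

lemma count_D_stepsOfDownCounts {m : ℕ} : ∀ {c l}, c ≤ m → l.Pairwise (· ≤ ·) →
    (∀ a ∈ l, c ≤ a ∧ a ≤ m) → (stepsOfDownCounts m c l).count D = m - c
  | c, [], _, _, _ => by simp [stepsOfDownCounts]
  | c, a :: l, hcm, hl, hb => by
    have ha := hb a mem_cons_self
    have := count_D_stepsOfDownCounts ha.2 (pairwise_cons.1 hl).2
      fun b hb' => ⟨(pairwise_cons.1 hl).1 b hb', (hb b (mem_cons_of_mem _ hb')).2⟩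
    rw [stepsOfDownCounts, count_append, count_replicate_self, count_cons_of_ne (by decide), this]
    omega

lemma forall_count_D_take_add_le_iff : ∀ {c u w},
    (∀ i, (w.take i).count D + c ≤ (w.take i).count U + u) ↔
      (∀ j (h : j < (downCounts c w).length), (downCounts c w)[j] ≤ j + u) ∧
        w.count D + c ≤ w.count U + u
  | c, u, [] => by simp [downCounts]
  | c, u, U :: w => by
    have ih := @forall_count_D_take_add_le_iff c (u + 1) w
    rw [← Nat.and_forall_add_one, ← Nat.and_forall_add_one (p := fun j => ∀ h : j < _, _)]
    simp [downCounts, Nat.add_comm, Nat.add_left_comm] at ih ⊢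
    rw [ih, and_assoc]
  | c, u, D :: w => by
    have ih := @forall_count_D_take_add_le_iff (c + 1) u w
    rw [← Nat.and_forall_add_one]
    simp [downCounts, Nat.add_comm, Nat.add_left_comm] at ih ⊢
    rw [ih, and_iff_right_of_imp]
    intro h
    exact (by simpa using ih.2 h 0 : c < u).le

lemma sortedOf_eq_ofFn {n : ℕ} {p : Fin n → ℕ} (hp : Monotone p) : sortedOf p = List.ofFn p :=
  mergeSort_eq_self _ hp.sortedLE_ofFn.pairwise

def IsSortedParkingList (l : List ℕ) : Prop :=
  l.SortedLE ∧ (∀ a ∈ l, 0 < a) ∧ ∀ i (h : i < l.length), l[i] ≤ i + 1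

lemma monotone_and_isParkingFunction_iff {n : ℕ} (p : Fin n → ℕ) :
    Monotone p ∧ IsParkingFunction p ↔ IsSortedParkingList (List.ofFn p) := by
  refine ⟨fun ⟨hp, hpos, hle⟩ => ⟨hp.sortedLE_ofFn, ?_, fun i hi => ?_⟩,
    fun ⟨hp, hpos, hle⟩ => ⟨sortedLE_ofFn_iff.1 hp, ?_, fun i hi => ?_⟩⟩
  · simpa [mem_ofFn] using hpos
  · have := hle i (by simpa using hi)
    rwa [sortedOf_eq_ofFn hp, getD_eq_getElem] at this
  · simpa [mem_ofFn] using hpos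
  · rw [sortedOf_eq_ofFn (sortedLE_ofFn_iff.1 hp), getD_eq_getElem]
    exact hle i (by simpa using hi)

lemma IsSortedParkingList.count_D_stepsOfDownCounts {l : List ℕ} (hl : IsSortedParkingList l) :
    (stepsOfDownCounts (l.length + 1) 1 l).count D = l.length := by
  refine _root_.count_D_stepsOfDownCounts (by omega) (sortedLE_iff_pairwise.1 hl.1) fun a ha => ?_
  obtain ⟨i, hi, rfl⟩ := mem_iff_getElem.1 ha
  exact ⟨hl.2.1 _ ha, (hl.2.2 i hi).trans (Nat.succ_le_succ hi.le)⟩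

def DyckWord.ofSortedParkingList (l : List ℕ) (hl : IsSortedParkingList l) : DyckWord where
  toList := stepsOfDownCounts (l.length + 1) 1 l
  count_U_eq_count_D := by rw [count_U_stepsOfDownCounts, hl.count_D_stepsOfDownCounts]
  count_D_le_count_U i := by
    have hdec : downCounts 1 (stepsOfDownCounts (l.length + 1) 1 l) = l :=
      downCounts_stepsOfDownCounts _ (sortedLE_iff_pairwise.1 hl.1) hl.2.1
    refine Nat.le_of_add_le_add_right (forall_count_D_take_add_le_iff.2 ⟨hdec ▸ hl.2.2, ?_⟩ i)
    rw [count_U_stepsOfDownCounts, hl.count_D_stepsOfDownCounts]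

lemma DyckWord.semilength_ofSortedParkingList (l : List ℕ) (hl : IsSortedParkingList l) :
    (DyckWord.ofSortedParkingList l hl).semilength = l.length :=
  count_U_stepsOfDownCounts _ _ _

lemma isSortedParkingList_downCounts (w : DyckWord) : IsSortedParkingList (downCounts 1 w.toList) :=
  ⟨sortedLE_iff_pairwise.2 (pairwise_downCounts 1 w), fun _ => le_of_mem_downCounts,
    (forall_count_D_take_add_le_iff.1 fun i => Nat.add_le_add_right (w.count_D_le_count_U i) 1).1⟩

def sortedParkingFunctionEquivVector (n : ℕ) :
    {p : Fin n → ℕ // Monotone p ∧ IsParkingFunction p} ≃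
      {v : List.Vector ℕ n // IsSortedParkingList v.toList} :=
  (Equiv.vectorEquivFin ℕ n).symm.subtypeEquiv fun p => by
    rw [monotone_and_isParkingFunction_iff]
    simp [Equiv.vectorEquivFin]

def sortedParkingListEquivDyckWord (n : ℕ) :
    {v : List.Vector ℕ n // IsSortedParkingList v.toList} ≃ {w : DyckWord // w.semilength = n} where
  toFun v := ⟨.ofSortedParkingList v.1.toList v.2, by
    rw [DyckWord.semilength_ofSortedParkingList, v.1.toList_length]⟩
  invFun w := ⟨⟨downCounts 1 w.1.toList, (length_downCounts 1 w.1.toList).trans w.2⟩,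
    isSortedParkingList_downCounts w.1⟩
  left_inv v := Subtype.ext <| Subtype.ext <|
    downCounts_stepsOfDownCounts _ (sortedLE_iff_pairwise.1 v.2.1) v.2.2.1
  right_inv w := Subtype.ext <| DyckWord.ext <| stepsOfDownCounts_downCounts _ <| by
    simp only [List.Vector.toList_mk, length_downCounts, w.1.count_U_eq_count_D, Nat.add_comm]

/-- The number of sorted (weakly increasing) parking functions of size `n` is
the `n`-th Catalan number. -/
theorem card_sorted_parkingFunctions (n : ℕ) :
    Nat.card {p : Fin n → ℕ // Monotone p ∧ IsParkingFunction p} = catalan n := by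
  rw [Nat.card_congr ((sortedParkingFunctionEquivVector n).trans (sortedParkingListEquivDyckWord n)),
    Nat.card_eq_fintype_card, DyckWord.card_dyckWord_semilength_eq_catalan]
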